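/- arXiv:1002.2190 — 2 statements merged into one kernel-verified Lean document; each statement's English description precedes it below -/
import Mathlib

section
/- Fix an integer p ≥ 1 and real parameters (β_q)_{q≥1} with only finitely many nonzero, and h ∈ ℝ. Let F_N(x) = N^{-1} E log Z_N and ψ_N(x) = N^{-1} log Z_N denote respectively the (averaged) free energy and the random free energy of the mixed p-spin model in which the coefficient β_p of the p-spin term H_p has been replaced by x, and let ⟨·⟩_x be the corresponding Gibbs average. Suppose that: (i) for every x in some open neighborhood of β_p, lim_{N→∞} E|ψ_N(x) − F_N(x)| = 0; (ii) for every x in that neighborhood, F_N(x) converges as N → ∞ to a limit P(x); (iii) P is differentiable at β_p. Then lim_{N→∞} N^{-1} E⟨|H_p(σ) − E⟨H_p(σ)⟩_{β_p}|⟩_{β_p} = 0. -/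
open MeasureTheory ProbabilityTheory Filter

noncomputable section

/-- A spin configuration on `N` sites; `true ↦ +1`, `false ↦ -1`. -/
abbrev Config (N : ℕ) := Fin N → Bool

/-- The spin value of a site. -/
def spin (b : Bool) : ℝ := if b then 1 else -1

variable {Ω : Type*} [MeasurableSpace Ω]

/-- The `p`-spin Hamiltonian
`H_p(σ) = N^{-(p-1)/2} ∑_{i₁,…,i_p} g_{i₁,…,i_p} σ_{i₁}⋯σ_{i_p}`. -/
def Hp (N p : ℕ) (g : (Fin p → Fin N) → Ω → ℝ) (σ : Config N) (ω : Ω) : ℝ :=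
  (N : ℝ) ^ (-(((p : ℝ) - 1) / 2)) *
    ∑ i : Fin p → Fin N, g i ω * ∏ k, spin (σ (i k))

/-- The Boltzmann weight `exp(∑_q β_q H_q(σ) + h ∑_i σ_i)`. -/
def weight (N : ℕ) (β : ℕ → ℝ) (h : ℝ)
    (g : (q : ℕ) → (Fin q → Fin N) → Ω → ℝ) (σ : Config N) (ω : Ω) : ℝ :=
  Real.exp ((∑ᶠ q, β q * Hp N q (g q) σ ω) + h * ∑ i, spin (σ i))

/-- The partition function `Z_N`. -/
def Zpart (N : ℕ) (β : ℕ → ℝ) (h : ℝ)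
    (g : (q : ℕ) → (Fin q → Fin N) → Ω → ℝ) (ω : Ω) : ℝ :=
  ∑ σ : Config N, weight N β h g σ ω

/-- The Gibbs measure `G_N(σ)`. -/
def gibbs (N : ℕ) (β : ℕ → ℝ) (h : ℝ)
    (g : (q : ℕ) → (Fin q → Fin N) → Ω → ℝ) (σ : Config N) (ω : Ω) : ℝ :=
  weight N β h g σ ω / Zpart N β h g ω

/-- The Gibbs average `⟨f⟩` of a (possibly random) function of `n` replicas. -/
def gibbsAvg (N : ℕ) (β : ℕ → ℝ) (h : ℝ)
    (g : (q : ℕ) → (Fin q → Fin N) → Ω → ℝ) (n : ℕ)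
    (f : (Fin n → Config N) → Ω → ℝ) (ω : Ω) : ℝ :=
  ∑ σs : Fin n → Config N, f σs ω * ∏ l, gibbs N β h g (σs l) ω

/-- The overlap `R_{1,2}` of two configurations. -/
def overlapR (N : ℕ) (σ τ : Config N) : ℝ :=
  (N : ℝ)⁻¹ * ∑ i, spin (σ i) * spin (τ i)

/-- The random free energy `ψ_N = N⁻¹ log Z_N`. -/
def psiFE (N : ℕ) (β : ℕ → ℝ) (h : ℝ)
    (g : (q : ℕ) → (Fin q → Fin N) → Ω → ℝ) (ω : Ω) : ℝ :=
  (N : ℝ)⁻¹ * Real.log (Zpart N β h g ω)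

/-- The disorder of the mixed model, for all `p`, is an i.i.d. standard Gaussian family. -/
def IsGaussianDisorder (N : ℕ) (g : (q : ℕ) → (Fin q → Fin N) → Ω → ℝ)
    (μ : Measure Ω) : Prop :=
  (∀ q (i : Fin q → Fin N), Measurable (g q i)) ∧
  (∀ q (i : Fin q → Fin N), Measure.map (g q i) μ = gaussianReal 0 1) ∧
  iIndepFun
    (fun qi : Σ q : ℕ, (Fin q → Fin N) => g qi.1 qi.2) μ

end

/-! For the exponential family `t ↦ exp (t H + A)`, Jensen's inequality bounds `exp (δ ⟨|H - c|⟩_x)`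
by `⟨exp (δ (H - c))⟩_x + ⟨exp (-δ (H - c))⟩_x = (e^{-δc} Z(x+δ) + e^{δc} Z(x-δ)) / Z(x)`, so
`δ ⟨|H - c|⟩_x` is at most `log 2` plus increments of `log Z`. Choosing `c = E⟨H⟩_x`, the convexity
of `t ↦ log Z(t)` turns these increments into the second difference `F(x+δ) + F(x-δ) - 2 F(x)` of
the averaged free energy plus the fluctuations `E|ψ - F|` at `x` and `x ± δ`. After dividing by `N`
and letting `N → ∞`, the bound becomes `(P(x+δ) + P(x-δ) - 2 P(x)) / δ`, which tends to `0` as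
`δ ↓ 0` because `P` is differentiable at `x`. -/

open Real

section FiniteGibbs

variable {S : Type*} [Fintype S]

noncomputable def partitionFn (H A : S → ℝ) (t : ℝ) : ℝ := ∑ σ, exp (t * H σ + A σ)

noncomputable def gibbsMean (H A : S → ℝ) (t : ℝ) (f : S → ℝ) : ℝ :=
  (∑ σ, f σ * exp (t * H σ + A σ)) / partitionFn H A t

variable (H A : S → ℝ) (t : ℝ)

lemma partitionFn_pos [Nonempty S] : 0 < partitionFn H A t :=
  Finset.sum_pos (fun _ _ => exp_pos _) Finset.univ_nonempty

lemma gibbsMean_mono {f f' : S → ℝ} (hf : ∀ σ, f σ ≤ f' σ) :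
    gibbsMean H A t f ≤ gibbsMean H A t f' :=
  div_le_div_of_nonneg_right
    (Finset.sum_le_sum fun σ _ => mul_le_mul_of_nonneg_right (hf σ) (exp_pos _).le)
    (Finset.sum_nonneg fun _ _ => (exp_pos _).le)

lemma gibbsMean_add (f f' : S → ℝ) :
    gibbsMean H A t (fun σ => f σ + f' σ) = gibbsMean H A t f + gibbsMean H A t f' := by
  simp only [gibbsMean, add_mul, Finset.sum_add_distrib, add_div]

lemma gibbsMean_const_mul (c : ℝ) (f : S → ℝ) :
    gibbsMean H A t (fun σ => c * f σ) = c * gibbsMean H A t f := by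
  simp only [gibbsMean, mul_assoc, ← Finset.mul_sum, mul_div_assoc]

lemma gibbsMean_const [Nonempty S] (c : ℝ) : gibbsMean H A t (fun _ => c) = c := by
  rw [gibbsMean, ← Finset.mul_sum, mul_div_assoc, ← partitionFn,
    div_self (partitionFn_pos H A t).ne', mul_one]

lemma exp_gibbsMean_le [Nonempty S] (f : S → ℝ) :
    exp (gibbsMean H A t f) ≤ gibbsMean H A t (fun σ => exp (f σ)) := by
  have hZ := partitionFn_pos H A t
  have hw : ∑ σ, exp (t * H σ + A σ) / partitionFn H A t = 1 := by
    rw [← Finset.sum_div]; exact div_self hZ.ne'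
  have := convexOn_exp.map_sum_le (t := Finset.univ) (p := f)
    (fun _ _ => by positivity) hw (fun _ _ => Set.mem_univ _)
  simpa only [gibbsMean, smul_eq_mul, Finset.sum_div, mul_div_assoc, mul_comm] using this

lemma gibbsMean_exp_mul_sub [Nonempty S] (s c : ℝ) :
    gibbsMean H A t (fun σ => exp (s * (H σ - c))) =
      exp (log (partitionFn H A (t + s)) - log (partitionFn H A t) - s * c) := by
  rw [exp_sub, exp_sub, exp_log (partitionFn_pos H A _), exp_log (partitionFn_pos H A _),
    gibbsMean, div_right_comm, div_left_inj' (partitionFn_pos H A t).ne',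
    eq_div_iff (exp_pos _).ne', Finset.sum_mul, partitionFn]
  refine Finset.sum_congr rfl fun σ _ => ?_
  rw [← exp_add, ← exp_add]
  ring_nf

lemma mul_gibbsMean_le_log_partitionFn_sub [Nonempty S] (s : ℝ) :
    s * gibbsMean H A t H ≤ log (partitionFn H A (t + s)) - log (partitionFn H A t) := by
  have h := exp_gibbsMean_le H A t (fun σ => s * (H σ - 0))
  rw [gibbsMean_exp_mul_sub, exp_le_exp] at h
  simpa only [sub_zero, mul_zero, gibbsMean_const_mul] using h

lemma mul_gibbsMean_abs_sub_le [Nonempty S] {x δ c M : ℝ}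
    (hplus : log (partitionFn H A (x + δ)) - log (partitionFn H A x) - δ * c ≤ M)
    (hminus : log (partitionFn H A (x - δ)) - log (partitionFn H A x) + δ * c ≤ M) :
    δ * gibbsMean H A x (fun σ => |H σ - c|) ≤ log 2 + M := by
  have hsplit : ∀ σ, exp (δ * |H σ - c|) ≤ exp (δ * (H σ - c)) + exp (-δ * (H σ - c)) := by
    intro σ
    rcases abs_cases (H σ - c) with ⟨habs, _⟩ | ⟨habs, _⟩
    · rw [habs]; linarith [exp_pos (-δ * (H σ - c))]
    · rw [habs, mul_neg, ← neg_mul]; linarith [exp_pos (δ * (H σ - c))]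
  rw [← exp_le_exp, exp_add, exp_log two_pos, two_mul]
  calc exp (δ * gibbsMean H A x fun σ => |H σ - c|)
      = exp (gibbsMean H A x fun σ => δ * |H σ - c|) := by rw [gibbsMean_const_mul]
    _ ≤ gibbsMean H A x fun σ => exp (δ * |H σ - c|) := exp_gibbsMean_le H A x _
    _ ≤ gibbsMean H A x fun σ => exp (δ * (H σ - c)) + exp (-δ * (H σ - c)) :=
        gibbsMean_mono H A x hsplit
    _ = exp (log (partitionFn H A (x + δ)) - log (partitionFn H A x) - δ * c)
          + exp (log (partitionFn H A (x - δ)) - log (partitionFn H A x) - -δ * c) := by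
        rw [gibbsMean_add, gibbsMean_exp_mul_sub, gibbsMean_exp_mul_sub, ← sub_eq_add_neg]
    _ ≤ exp M + exp M := by gcongr; linarith

lemma abs_gibbsMean_le [Nonempty S] (f : S → ℝ) : |gibbsMean H A t f| ≤ ∑ σ, |f σ| := by
  have hf : ∀ σ, |f σ| ≤ ∑ τ, |f τ| := fun σ =>
    Finset.single_le_sum (f := fun τ => |f τ|) (fun _ _ => abs_nonneg _) (Finset.mem_univ σ)
  rw [abs_le]
  constructor
  · calc -∑ τ, |f τ| = gibbsMean H A t (fun _ => -∑ τ, |f τ|) := (gibbsMean_const H A t _).symm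
      _ ≤ gibbsMean H A t f := gibbsMean_mono H A t fun σ => by linarith [neg_abs_le (f σ), hf σ]
  · calc gibbsMean H A t f ≤ gibbsMean H A t (fun _ => ∑ τ, |f τ|) :=
          gibbsMean_mono H A t fun σ => (le_abs_self _).trans (hf σ)
      _ = ∑ τ, |f τ| := gibbsMean_const H A t _

lemma abs_log_partitionFn_le [Nonempty S] :
    |log (partitionFn H A t)| ≤ log (Fintype.card S) + ∑ σ, |t * H σ + A σ| := by
  set B := ∑ σ, |t * H σ + A σ|
  have hB : ∀ σ, |t * H σ + A σ| ≤ B := fun σ =>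
    Finset.single_le_sum (f := fun τ => |t * H τ + A τ|) (fun _ _ => abs_nonneg _)
      (Finset.mem_univ σ)
  have hlower : -B ≤ log (partitionFn H A t) := by
    obtain ⟨σ₀⟩ := ‹Nonempty S›
    calc -B ≤ t * H σ₀ + A σ₀ := by linarith [neg_abs_le (t * H σ₀ + A σ₀), hB σ₀]
      _ = log (exp (t * H σ₀ + A σ₀)) := (log_exp _).symm
      _ ≤ log (partitionFn H A t) :=
          log_le_log (exp_pos _) (Finset.single_le_sum (f := fun σ => exp (t * H σ + A σ))
            (fun _ _ => (exp_pos _).le) (Finset.mem_univ σ₀))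
  have hupper : log (partitionFn H A t) ≤ log (Fintype.card S) + B := by
    rw [← log_exp B, ← log_mul (by positivity) (exp_pos B).ne']
    refine log_le_log (partitionFn_pos H A t) ?_
    calc partitionFn H A t ≤ ∑ _σ : S, exp B :=
          Finset.sum_le_sum fun σ _ => exp_le_exp.2 ((le_abs_self _).trans (hB σ))
      _ = Fintype.card S * exp B := by simp
  have hcard : 0 ≤ log (Fintype.card S) := log_nonneg (by exact_mod_cast Fintype.card_pos)
  exact abs_le.2 ⟨by linarith, hupper⟩

end FiniteGibbs

section RandomGibbs

variable {Ω S : Type*} [MeasurableSpace Ω] {μ : Measure Ω} [Fintype S] [Nonempty S]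

noncomputable def meanAbsDev (μ : Measure Ω) (X : Ω → ℝ) : ℝ := ∫ ω, |X ω - ∫ ω', X ω' ∂μ| ∂μ

lemma meanAbsDev_const_mul (c : ℝ) (X : Ω → ℝ) :
    meanAbsDev μ (fun ω => c * X ω) = |c| * meanAbsDev μ X := by
  simp only [meanAbsDev, integral_const_mul, ← mul_sub, abs_mul]

noncomputable def logPartition (H A : Ω → S → ℝ) (t : ℝ) (ω : Ω) : ℝ :=
  log (partitionFn (H ω) (A ω) t)

variable {H A : Ω → S → ℝ}

lemma integrable_logPartition [IsFiniteMeasure μ] (hH : ∀ σ, Integrable (fun ω => H ω σ) μ)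
    (hA : ∀ σ, Integrable (fun ω => A ω σ) μ) (t : ℝ) :
    Integrable (logPartition H A t) μ := by
  have hHm := fun σ => (hH σ).aemeasurable
  have hAm := fun σ => (hA σ).aemeasurable
  refine Integrable.mono' (g := fun ω => log (Fintype.card S) + ∑ σ, |t * H ω σ + A ω σ|)
    ((integrable_const _).add (integrable_finsetSum _ fun σ _ =>
      (((hH σ).const_mul t).add (hA σ)).abs)) ?_
    (ae_of_all _ fun ω => abs_log_partitionFn_le (H ω) (A ω) t)
  unfold logPartition partitionFn
  exact AEMeasurable.aestronglyMeasurable (by fun_prop)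

lemma integrable_gibbsMean (hH : ∀ σ, AEMeasurable (fun ω => H ω σ) μ)
    (hA : ∀ σ, AEMeasurable (fun ω => A ω σ) μ) {f : Ω → S → ℝ}
    (hf : ∀ σ, Integrable (fun ω => f ω σ) μ) (t : ℝ) :
    Integrable (fun ω => gibbsMean (H ω) (A ω) t (f ω)) μ := by
  have hfm := fun σ => (hf σ).aemeasurable
  refine Integrable.mono' (g := fun ω => ∑ σ, |f ω σ|)
    (integrable_finsetSum _ fun σ _ => (hf σ).abs) ?_
    (ae_of_all _ fun ω => abs_gibbsMean_le (H ω) (A ω) t (f ω))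
  unfold gibbsMean partitionFn
  exact AEMeasurable.aestronglyMeasurable (by fun_prop)

lemma mul_integral_gibbsMean_le [IsFiniteMeasure μ] (hH : ∀ σ, Integrable (fun ω => H ω σ) μ)
    (hA : ∀ σ, Integrable (fun ω => A ω σ) μ) (t s : ℝ) :
    s * ∫ ω, gibbsMean (H ω) (A ω) t (H ω) ∂μ ≤
      ∫ ω, logPartition H A (t + s) ω ∂μ - ∫ ω, logPartition H A t ω ∂μ := by
  rw [← integral_const_mul, ← integral_sub (integrable_logPartition hH hA _)
    (integrable_logPartition hH hA _)]
  exact integral_mono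
    ((integrable_gibbsMean (fun σ => (hH σ).aemeasurable) (fun σ => (hA σ).aemeasurable) hH
      t).const_mul s)
    ((integrable_logPartition hH hA _).sub (integrable_logPartition hH hA _))
    fun ω => mul_gibbsMean_le_log_partitionFn_sub (H ω) (A ω) t s

theorem mul_integral_gibbsMean_abs_sub_le [IsProbabilityMeasure μ]
    (hH : ∀ σ, Integrable (fun ω => H ω σ) μ) (hA : ∀ σ, Integrable (fun ω => A ω σ) μ)
    (x δ : ℝ) :
    δ * ∫ ω, gibbsMean (H ω) (A ω) x
        (fun σ => |H ω σ - ∫ ω', gibbsMean (H ω') (A ω') x (H ω') ∂μ|) ∂μ ≤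
      log 2 + (∫ ω, logPartition H A (x + δ) ω ∂μ + ∫ ω, logPartition H A (x - δ) ω ∂μ
          - 2 * ∫ ω, logPartition H A x ω ∂μ) +
        (meanAbsDev μ (logPartition H A (x + δ)) + meanAbsDev μ (logPartition H A (x - δ))
          + 2 * meanAbsDev μ (logPartition H A x)) := by
  set c := ∫ ω, gibbsMean (H ω) (A ω) x (H ω) ∂μ
  set Φ := fun t => ∫ ω, logPartition H A t ω ∂μ
  have hdev : ∀ t, Integrable (fun ω => |logPartition H A t ω - Φ t|) μ := fun t =>
    ((integrable_logPartition hH hA t).sub (integrable_const _)).abs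
  -- convexity of `Φ`: `c` lies between its one-sided difference quotients at `x`
  have hup : δ * c ≤ Φ (x + δ) - Φ x := mul_integral_gibbsMean_le hH hA x δ
  have hlow : -δ * c ≤ Φ (x - δ) - Φ x := by
    simpa only [← sub_eq_add_neg] using mul_integral_gibbsMean_le hH hA x (-δ)
  have hpointwise : ∀ ω, δ * gibbsMean (H ω) (A ω) x (fun σ => |H ω σ - c|) ≤
      log 2 + (Φ (x + δ) + Φ (x - δ) - 2 * Φ x) + (|logPartition H A (x + δ) ω - Φ (x + δ)|
        + |logPartition H A (x - δ) ω - Φ (x - δ)| + 2 * |logPartition H A x ω - Φ x|) := by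
    intro ω
    unfold logPartition
    rw [add_assoc]
    refine mul_gibbsMean_abs_sub_le (H ω) (A ω) ?_ ?_ <;>
      linarith [le_abs_self (log (partitionFn (H ω) (A ω) (x + δ)) - Φ (x + δ)),
        le_abs_self (log (partitionFn (H ω) (A ω) (x - δ)) - Φ (x - δ)),
        neg_abs_le (log (partitionFn (H ω) (A ω) x) - Φ x),
        abs_nonneg (log (partitionFn (H ω) (A ω) (x + δ)) - Φ (x + δ)),
        abs_nonneg (log (partitionFn (H ω) (A ω) (x - δ)) - Φ (x - δ)),
        abs_nonneg (log (partitionFn (H ω) (A ω) x) - Φ x)]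
  have hdevs := ((hdev (x + δ)).fun_add (hdev (x - δ))).fun_add ((hdev x).const_mul 2)
  calc δ * ∫ ω, gibbsMean (H ω) (A ω) x (fun σ => |H ω σ - c|) ∂μ
      = ∫ ω, δ * gibbsMean (H ω) (A ω) x (fun σ => |H ω σ - c|) ∂μ :=
        (integral_const_mul _ _).symm
    _ ≤ _ := integral_mono ((integrable_gibbsMean (fun σ => (hH σ).aemeasurable)
          (fun σ => (hA σ).aemeasurable) (fun σ => ((hH σ).sub (integrable_const c)).abs)
          x).const_mul δ) ((integrable_const _).fun_add hdevs) hpointwise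
    _ = _ := by
        rw [integral_add (integrable_const _) hdevs,
          integral_add ((hdev _).fun_add (hdev _)) ((hdev _).const_mul 2),
          integral_add (hdev _) (hdev _), integral_const_mul, integral_const]
        simp [meanAbsDev, Φ]

end RandomGibbs

section PSpin

open Function

lemma finsum_update_mul {α : Type*} [DecidableEq α] {β : α → ℝ} (hβ : (support β).Finite)
    (p : α) (x : ℝ) (c : α → ℝ) :
    ∑ᶠ q, update β p x q * c q = x * c p + ∑ᶠ q, update β p 0 q * c q := by
  have hsplit : ∀ q,
      update β p x q * c q = (Pi.single p (x * c p) : α → ℝ) q + update β p 0 q * c q := by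
    intro q
    rcases eq_or_ne q p with rfl | hq
    · simp
    · simp [hq]
  have hfin : (support fun q => update β p 0 q * c q).Finite :=
    hβ.subset ((support_mul_subset_left _ _).trans (by simp [support_update_zero]))
  rw [finsum_congr hsplit,
    finsum_add_distrib ((Set.finite_singleton p).subset Pi.support_single_subset) hfin,
    finsum_eq_single _ p fun q hq => Pi.single_eq_of_ne hq _, Pi.single_eq_same]

variable {Ω : Type*} {N p : ℕ} {β : ℕ → ℝ} {h : ℝ}
  {g : (q : ℕ) → (Fin q → Fin N) → Ω → ℝ}

noncomputable def complementaryEnergy (N p : ℕ) (β : ℕ → ℝ) (h : ℝ)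
    (g : (q : ℕ) → (Fin q → Fin N) → Ω → ℝ) (ω : Ω) (σ : Config N) : ℝ :=
  (∑ᶠ q, update β p 0 q * Hp N q (g q) σ ω) + h * ∑ i, spin (σ i)

lemma weight_update (hβ : (support β).Finite) (x : ℝ) (σ : Config N) (ω : Ω) :
    weight N (update β p x) h g σ ω =
      exp (x * Hp N p (g p) σ ω + complementaryEnergy N p β h g ω σ) := by
  rw [weight, finsum_update_mul hβ, complementaryEnergy, add_assoc]

lemma psiFE_update (hβ : (support β).Finite) (x : ℝ) :
    psiFE N (update β p x) h g = fun ω => (N : ℝ)⁻¹ *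
      logPartition (fun ω σ => Hp N p (g p) σ ω) (complementaryEnergy N p β h g) x ω := by
  ext ω
  simp only [psiFE, logPartition, partitionFn, Zpart, weight_update hβ]

lemma gibbsAvg_one_update (hβ : (support β).Finite) (x : ℝ)
    (f : (Fin 1 → Config N) → Ω → ℝ) (ω : Ω) :
    gibbsAvg N (update β p x) h g 1 f ω =
      gibbsMean (fun σ => Hp N p (g p) σ ω) (complementaryEnergy N p β h g ω) x
        (fun σ => f (fun _ => σ) ω) := by
  have hconst : ∀ σ : Config N, uniqueElim σ = fun _ : Fin 1 => σ := fun σ =>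
    funext (uniqueElim_const σ)
  rw [gibbsAvg, ← (Equiv.funUnique (Fin 1) (Config N)).symm.sum_comp, gibbsMean, Finset.sum_div]
  simp [gibbs, Zpart, partitionFn, weight_update hβ, mul_div_assoc, hconst]

lemma gibbsAvg_nonneg {n : ℕ} {f : (Fin n → Config N) → Ω → ℝ} (hf : ∀ σs ω, 0 ≤ f σs ω)
    (ω : Ω) : 0 ≤ gibbsAvg N β h g n f ω :=
  Finset.sum_nonneg fun σs _ => mul_nonneg (hf σs ω) <| Finset.prod_nonneg fun _ _ =>
    div_nonneg (exp_pos _).le (Finset.sum_nonneg fun _ _ => (exp_pos _).le)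

variable [MeasurableSpace Ω] {μ : Measure Ω}

lemma integrable_Hp {q : ℕ} {g : (Fin q → Fin N) → Ω → ℝ} (hg : ∀ i, Integrable (g i) μ)
    (σ : Config N) : Integrable (fun ω => Hp N q g σ ω) μ :=
  (integrable_finsetSum _ fun i _ => (hg i).mul_const _).const_mul _

lemma integrable_complementaryEnergy [IsFiniteMeasure μ] (hβ : (support β).Finite)
    (hg : ∀ q i, Integrable (g q i) μ) (σ : Config N) :
    Integrable (fun ω => complementaryEnergy N p β h g ω σ) μ := by
  have hsupp : ∀ ω, (support fun q => update β p 0 q * Hp N q (g q) σ ω) ⊆ hβ.toFinset :=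
    fun ω => (support_mul_subset_left _ _).trans (by simp [support_update_zero])
  simp only [complementaryEnergy, finsum_eq_sum_of_support_subset _ (hsupp _)]
  exact (integrable_finsetSum _ fun q _ => (integrable_Hp (hg q) σ).const_mul _).add
    (integrable_const _)

lemma IsGaussianDisorder.integrable (hg : IsGaussianDisorder N g μ) (q : ℕ) (i : Fin q → Fin N) :
    Integrable (g q i) μ := by
  have : Integrable id (μ.map (g q i)) := by
    rw [hg.2.1 q i]
    exact (memLp_id_gaussianReal 1).integrable le_rfl
  exact this.comp_measurable (hg.1 q i)

end PSpin

section PSpinEstimate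

open Function

variable {Ω : Type*} [MeasurableSpace Ω] {μ : Measure Ω} [IsProbabilityMeasure μ] {N p : ℕ}
  {β : ℕ → ℝ} {h : ℝ} {g : (q : ℕ) → (Fin q → Fin N) → Ω → ℝ}

theorem mul_inv_integral_gibbsAvg_abs_sub_le (hβ : (support β).Finite)
    (hg : ∀ q i, Integrable (g q i) μ) (x δ : ℝ) :
    δ * ((N : ℝ)⁻¹ * ∫ ω, gibbsAvg N (update β p x) h g 1
        (fun σs ω' => |Hp N p (g p) (σs 0) ω' -
          ∫ ω'', gibbsAvg N (update β p x) h g 1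
            (fun τs ω''' => Hp N p (g p) (τs 0) ω''') ω'' ∂μ|) ω ∂μ) ≤
      (N : ℝ)⁻¹ * log 2 +
        (∫ ω, psiFE N (update β p (x + δ)) h g ω ∂μ + ∫ ω, psiFE N (update β p (x - δ)) h g ω ∂μ
          - 2 * ∫ ω, psiFE N (update β p x) h g ω ∂μ) +
        (meanAbsDev μ (psiFE N (update β p (x + δ)) h g)
          + meanAbsDev μ (psiFE N (update β p (x - δ)) h g)
          + 2 * meanAbsDev μ (psiFE N (update β p x) h g)) := by
  have hN : 0 ≤ (N : ℝ)⁻¹ := by positivity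
  have key := mul_integral_gibbsMean_abs_sub_le (H := fun ω σ => Hp N p (g p) σ ω)
    (A := complementaryEnergy N p β h g)
    (fun σ => integrable_Hp (hg p) σ) (integrable_complementaryEnergy hβ hg) x δ
  simp only [gibbsAvg_one_update hβ, psiFE_update hβ, meanAbsDev_const_mul, integral_const_mul,
    abs_of_nonneg hN]
  linarith [mul_le_mul_of_nonneg_left key hN]

end PSpinEstimate

section Limit

open Topology

theorem DifferentiableAt.tendsto_second_difference_div {P : ℝ → ℝ} {x : ℝ}
    (hP : DifferentiableAt ℝ P x) :
    Tendsto (fun δ => (P (x + δ) + P (x - δ) - 2 * P x) / δ) (𝓝[>] 0) (𝓝 0) := by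
  have hd := hP.hasDerivAt
  have hright := hd.tendsto_slope_zero_right
  have hleft := (hd.tendsto_slope_zero_left).comp (neg_zero (G := ℝ) ▸ tendsto_neg_nhdsGT_neg)
  have := hright.sub hleft
  rw [sub_self] at this
  refine this.congr fun δ => ?_
  simp only [Function.comp_apply, smul_eq_mul, ← sub_eq_add_neg, inv_neg]
  ring

theorem tendsto_zero_of_mul_le_second_difference {a : ℕ → ℝ} {P : ℝ → ℝ} {x ε : ℝ}
    (hε : 0 < ε) (ha : ∀ N, 0 ≤ a N) (hP : DifferentiableAt ℝ P x)
    (hb : ∀ δ, 0 < δ → δ < ε → ∃ b : ℕ → ℝ,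
      Tendsto b atTop (𝓝 (P (x + δ) + P (x - δ) - 2 * P x)) ∧ ∀ N, δ * a N ≤ b N) :
    Tendsto a atTop (𝓝 0) := by
  refine tendsto_order.2 ⟨fun l hl => Eventually.of_forall fun N => hl.trans_le (ha N),
    fun η hη => ?_⟩
  obtain ⟨δ, hsmall, hδ⟩ := ((hP.tendsto_second_difference_div.eventually (gt_mem_nhds hη)).and
    (Ioo_mem_nhdsGT hε)).exists
  obtain ⟨b, hlim, hab⟩ := hb δ hδ.1 hδ.2
  rw [div_lt_iff₀ hδ.1] at hsmall
  filter_upwards [hlim.eventually (gt_mem_nhds hsmall)] with N hN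
  exact lt_of_mul_lt_mul_left ((hab N).trans_lt (hN.trans_eq (mul_comm η δ))) hδ.1.le

end Limit

theorem statement0_general {Ω : Type*} [MeasurableSpace Ω] (μ : Measure Ω) [IsProbabilityMeasure μ]
    (p : ℕ) (β : ℕ → ℝ) (hβ : (Function.support β).Finite) (h : ℝ)
    (g : (N : ℕ) → (q : ℕ) → (Fin q → Fin N) → Ω → ℝ)
    (hg : ∀ N, IsGaussianDisorder N (g N) μ)
    (P : ℝ → ℝ) (ε : ℝ) (hε : 0 < ε)
    (hconc : ∀ x, |x - β p| < ε →
      Tendsto (fun N => ∫ ω, |psiFE N (Function.update β p x) h (g N) ω -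
          ∫ ω', psiFE N (Function.update β p x) h (g N) ω' ∂μ| ∂μ) atTop (nhds 0))
    (hF : ∀ x, |x - β p| < ε →
      Tendsto (fun N => ∫ ω, psiFE N (Function.update β p x) h (g N) ω ∂μ)
        atTop (nhds (P x)))
    (hPdiff : DifferentiableAt ℝ P (β p)) :
    Tendsto (fun N : ℕ => (N : ℝ)⁻¹ * ∫ ω, gibbsAvg N β h (g N) 1
        (fun σs ω' => |Hp N p (g N p) (σs 0) ω' -
          ∫ ω'', gibbsAvg N β h (g N) 1
            (fun τs ω''' => Hp N p (g N p) (τs 0) ω''') ω'' ∂μ|) ω ∂μ)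
      atTop (nhds 0) := by
  rw [← Function.update_eq_self p β]
  refine tendsto_zero_of_mul_le_second_difference hε
    (fun N => mul_nonneg (by positivity)
      (integral_nonneg fun ω => gibbsAvg_nonneg (fun _ _ => abs_nonneg _) ω)) hPdiff
    fun δ hδ hδε => ⟨_, ?_, fun N =>
      mul_inv_integral_gibbsAvg_abs_sub_le hβ (fun q i => (hg N).integrable q i) (β p) δ⟩
  have hplus : |β p + δ - β p| < ε := by simpa [abs_of_pos hδ]
  have hminus : |β p - δ - β p| < ε := by simpa [abs_of_pos hδ]
  have hzero : |β p - β p| < ε := by simpa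
  have hlog : Tendsto (fun N : ℕ => (N : ℝ)⁻¹ * log 2) atTop (nhds 0) := by
    simpa using tendsto_inv_atTop_nhds_zero_nat.mul_const (log 2)
  convert (hlog.add (((hF _ hplus).add (hF _ hminus)).sub ((hF _ hzero).const_mul 2))).add
    (((hconc _ hplus).add (hconc _ hminus)).add ((hconc _ hzero).const_mul 2)) using 2
  · rfl
  · ring

/-- If in some open neighborhood of `β_p` the random free energy of the
mixed `p`-spin model (with the coefficient of `H_p` replaced by `x`) concentrates around its
mean, the averaged free energy converges to a limit `P(x)`, and `P` is differentiable at `β_p`,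
then `N⁻¹ E⟨|H_p(σ) − E⟨H_p(σ)⟩|⟩ → 0` (Gibbs averages taken at the original parameters). -/
theorem statement0 {Ω : Type*} [MeasurableSpace Ω] (μ : Measure Ω) [IsProbabilityMeasure μ]
    (p : ℕ) (hp : 1 ≤ p) (β : ℕ → ℝ) (hβ : (Function.support β).Finite) (h : ℝ)
    (g : (N : ℕ) → (q : ℕ) → (Fin q → Fin N) → Ω → ℝ)
    (hg : ∀ N, IsGaussianDisorder N (g N) μ)
    (P : ℝ → ℝ) (ε : ℝ) (hε : 0 < ε)
    (hconc : ∀ x, |x - β p| < ε →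
      Tendsto (fun N => ∫ ω, |psiFE N (Function.update β p x) h (g N) ω -
          ∫ ω', psiFE N (Function.update β p x) h (g N) ω' ∂μ| ∂μ) atTop (nhds 0))
    (hF : ∀ x, |x - β p| < ε →
      Tendsto (fun N => ∫ ω, psiFE N (Function.update β p x) h (g N) ω ∂μ)
        atTop (nhds (P x)))
    (hPdiff : DifferentiableAt ℝ P (β p)) :
    Tendsto (fun N : ℕ => (N : ℝ)⁻¹ * ∫ ω, gibbsAvg N β h (g N) 1
        (fun σs ω' => |Hp N p (g N p) (σs 0) ω' -
          ∫ ω'', gibbsAvg N β h (g N) 1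
            (fun τs ω''' => Hp N p (g N p) (τs 0) ω''') ω'' ∂μ|) ω ∂μ)
      atTop (nhds 0) :=
  statement0_general μ p β hβ h g hg P ε hε hconc hF hPdiff
end

section
/- Let Σ be a finite nonempty set, ν a (possibly random) measure on Σ with positive total mass, and A : Σ → ℝ a (possibly random) function with E⟨A²⟩_x < ∞ for all x in [x₀, x₀ + δ] where δ > 0. Then E⟨|A(σ¹) − A(σ²)|⟩_{x₀} ≤ 2·(δ^{−1} ∫_{x₀}^{x₀+δ} E⟨(A(σ) − ⟨A(σ)⟩_x)²⟩_x dx)^{1/2} + 8 ∫_{x₀}^{x₀+δ} E⟨(A(σ) − ⟨A(σ)⟩_x)²⟩_x dx, where σ¹, σ² are independent replicas from the Gibbs measure G_{x₀}. -/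
open MeasureTheory ProbabilityTheory Filter

noncomputable section

variable {Ω : Type*} [MeasurableSpace Ω]

/-- The Gibbs weight `ν(σ) · exp(t A(σ))` of a configuration. -/
def gWeight {S : Type*} (ν : Ω → S → ℝ) (A : Ω → S → ℝ) (t : ℝ) (ω : Ω) (σ : S) : ℝ :=
  ν ω σ * Real.exp (t * A ω σ)

/-- The normalization `Z = ∫ exp(t A(σ)) dν(σ)`. -/
def gZ {S : Type*} [Fintype S] (ν : Ω → S → ℝ) (A : Ω → S → ℝ) (t : ℝ) (ω : Ω) : ℝ :=
  ∑ σ : S, gWeight ν A t ω σ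

/-- The Gibbs measure `G_t` with density proportional to `exp(t A(σ))` w.r.t. `ν`. -/
def gGibbs {S : Type*} [Fintype S] (ν : Ω → S → ℝ) (A : Ω → S → ℝ) (t : ℝ) (ω : Ω)
    (σ : S) : ℝ :=
  gWeight ν A t ω σ / gZ ν A t ω

/-- The Gibbs average `⟨f⟩_t` of a (possibly random) function of `n` replicas. -/
def gAvg {S : Type*} [Fintype S] (ν : Ω → S → ℝ) (A : Ω → S → ℝ) (t : ℝ) (n : ℕ)
    (f : (Fin n → S) → Ω → ℝ) (ω : Ω) : ℝ :=
  ∑ σs : Fin n → S, f σs ω * ∏ l, gGibbs ν A t ω (σs l)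

/-! For fixed disorder write `g t = ⟨|A(σ¹) - A(σ²)|⟩_t` and `v t = ⟨(A - ⟨A⟩_t)²⟩_t`.
Centring at `⟨A⟩_t` gives `g ≤ 2 √v`. The derivative of a Gibbs weight in `t` is the weight
times `A - ⟨A⟩_t`, so `g' = ⟨|A¹ - A²| ((A¹ - ⟨A⟩) + (A² - ⟨A⟩))⟩`, and since
`|x - y| |x + y| = |x² - y²| ≤ x² + y²` this gives `|g'| ≤ 2 v`. Hence
`g x₀ ≤ 2 √(v x) + 2 ∫_{x₀}^{x₀+δ} v` for every `x` in the interval. Take expectations at a point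
`x` where `E v x` is at most its average over the interval and apply Jensen to the square root;
this even gives the constant `2` in place of `8`.

Integrability (and Fubini) rest on `v x ≤ ⟨A²⟩_x ≤ ⟨A²⟩_{x₀} + ⟨A²⟩_{x₀+δ}`: the derivative of
`t ↦ ⟨f(A)⟩_t` is a covariance, nonnegative for monotone `f`, so splitting `A² = (A⁺)² + (A⁻)²`
bounds each part by its value at one endpoint. -/

open Finset

section Jensen

variable {α : Type*} [MeasurableSpace α] {μ : Measure α} {f : α → ℝ}

lemma integrable_sqrt_of_nonneg [IsFiniteMeasure μ] (hf : Integrable f μ) (hf₀ : ∀ x, 0 ≤ f x) :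
    Integrable (fun x => √(f x)) μ := by
  refine ((memLp_two_iff_integrable_sq
    (Real.continuous_sqrt.comp_aestronglyMeasurable hf.1)).2 ?_).integrable one_le_two
  simpa only [Real.sq_sqrt (hf₀ _)] using hf

lemma integral_sqrt_le_sqrt_integral [IsProbabilityMeasure μ] (hf : Integrable f μ)
    (hf₀ : ∀ x, 0 ≤ f x) : ∫ x, √(f x) ∂μ ≤ √(∫ x, f x ∂μ) :=
  Real.strictConcaveOn_sqrt.concaveOn.le_map_integral Real.continuous_sqrt.continuousOn isClosed_Ici
    (ae_of_all _ hf₀) hf (integrable_sqrt_of_nonneg hf hf₀)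

end Jensen

namespace FiniteGibbs

section Deterministic

variable {S : Type*} [Fintype S]

-- `w`, `a` stand for one realisation `ν ω`, `A ω`; `prob w a t` is the Gibbs measure `G_t` and
-- `avg₂` averages over two independent replicas.

def partitionFn (w a : S → ℝ) (t : ℝ) : ℝ := ∑ σ, w σ * Real.exp (t * a σ)

def prob (w a : S → ℝ) (t : ℝ) (σ : S) : ℝ := w σ * Real.exp (t * a σ) / partitionFn w a t

def avg (w a : S → ℝ) (t : ℝ) (f : S → ℝ) : ℝ := ∑ σ, f σ * prob w a t σ

def avg₂ (w a : S → ℝ) (t : ℝ) (F : S → S → ℝ) : ℝ :=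
  ∑ σ, ∑ τ, F σ τ * (prob w a t σ * prob w a t τ)

def var (w a : S → ℝ) (t : ℝ) : ℝ := avg w a t fun σ => (a σ - avg w a t a) ^ 2

def replicaGap (w a : S → ℝ) (t : ℝ) : ℝ := avg₂ w a t fun σ τ => |a σ - a τ|

variable {w a : S → ℝ} {t : ℝ}

lemma avg₂_add (F G : S → S → ℝ) :
    avg₂ w a t (fun σ τ => F σ τ + G σ τ) = avg₂ w a t F + avg₂ w a t G := by
  simp only [avg₂, add_mul, sum_add_distrib]

lemma avg_add (f g : S → ℝ) :
    avg w a t (fun σ => f σ + g σ) = avg w a t f + avg w a t g := by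
  simp only [avg, add_mul, sum_add_distrib]

lemma avg_neg (f : S → ℝ) : avg w a t (fun σ => -f σ) = -avg w a t f := by
  simp only [avg, neg_mul, sum_neg_distrib]

lemma avg₂_neg (F : S → S → ℝ) : avg₂ w a t (fun σ τ => -F σ τ) = -avg₂ w a t F := by
  simp only [avg₂, neg_mul, sum_neg_distrib]

lemma avg₂_swap (F : S → S → ℝ) : avg₂ w a t (fun σ τ => F τ σ) = avg₂ w a t F := by
  simp only [avg₂]
  rw [sum_comm]
  simp only [mul_comm (prob w a t _) (prob w a t _)]

lemma avg₂_mul_left_right (f g : S → ℝ) :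
    avg₂ w a t (fun σ τ => f σ * g τ) = avg w a t f * avg w a t g := by
  simp only [avg₂, avg, sum_mul_sum]
  exact sum_congr rfl fun σ _ => sum_congr rfl fun τ _ => by ring

section Positive

variable (hw : ∀ σ, 0 ≤ w σ) (hw₁ : 0 < ∑ σ, w σ)
include hw hw₁

lemma partitionFn_pos (t : ℝ) : 0 < partitionFn w a t := by
  obtain ⟨σ, -, hσ⟩ := exists_lt_of_sum_lt (by simpa using hw₁ : ∑ σ, (0 : ℝ) < ∑ σ, w σ)
  exact sum_pos' (fun σ _ => mul_nonneg (hw σ) (Real.exp_pos _).le)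
    ⟨σ, mem_univ σ, mul_pos hσ (Real.exp_pos _)⟩

lemma prob_nonneg (t : ℝ) (σ : S) : 0 ≤ prob w a t σ :=
  div_nonneg (mul_nonneg (hw σ) (Real.exp_pos _).le) (partitionFn_pos hw hw₁ t).le

lemma sum_prob (t : ℝ) : ∑ σ, prob w a t σ = 1 := by
  simp only [prob]
  rw [← sum_div]
  exact div_self (partitionFn_pos hw hw₁ t).ne'

lemma avg_nonneg {f : S → ℝ} (hf : ∀ σ, 0 ≤ f σ) : 0 ≤ avg w a t f :=
  sum_nonneg fun σ _ => mul_nonneg (hf σ) (prob_nonneg hw hw₁ t σ)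

lemma avg₂_nonneg {F : S → S → ℝ} (hF : ∀ σ τ, 0 ≤ F σ τ) : 0 ≤ avg₂ w a t F :=
  sum_nonneg fun σ _ => sum_nonneg fun τ _ => mul_nonneg (hF σ τ)
    (mul_nonneg (prob_nonneg hw hw₁ t σ) (prob_nonneg hw hw₁ t τ))

lemma avg₂_mono {F G : S → S → ℝ} (hFG : ∀ σ τ, F σ τ ≤ G σ τ) :
    avg₂ w a t F ≤ avg₂ w a t G :=
  sum_le_sum fun σ _ => sum_le_sum fun τ _ => mul_le_mul_of_nonneg_right (hFG σ τ)
    (mul_nonneg (prob_nonneg hw hw₁ t σ) (prob_nonneg hw hw₁ t τ))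

lemma abs_avg₂_le {F G : S → S → ℝ} (hFG : ∀ σ τ, |F σ τ| ≤ G σ τ) :
    |avg₂ w a t F| ≤ avg₂ w a t G := by
  refine abs_le.2 ⟨?_, avg₂_mono hw hw₁ fun σ τ => (le_abs_self _).trans (hFG σ τ)⟩
  rw [← avg₂_neg]
  exact avg₂_mono hw hw₁ fun σ τ => neg_le_of_abs_le (hFG σ τ)

lemma avg₂_left (f : S → ℝ) : avg₂ w a t (fun σ _ => f σ) = avg w a t f := by
  simpa [avg, sum_prob hw hw₁] using avg₂_mul_left_right (w := w) (a := a) (t := t) f fun _ => 1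

lemma avg₂_right (f : S → ℝ) : avg₂ w a t (fun _ τ => f τ) = avg w a t f := by
  rw [avg₂_swap (fun σ _ => f σ), avg₂_left hw hw₁]

lemma avg_sub_avg_sq (f : S → ℝ) :
    avg w a t (fun σ => (f σ - avg w a t f) ^ 2) =
      avg w a t (fun σ => f σ ^ 2) - avg w a t f ^ 2 := by
  set m := avg w a t f
  have hm : ∑ σ, f σ * prob w a t σ = m := rfl
  calc ∑ σ, (f σ - m) ^ 2 * prob w a t σ
      = ∑ σ, f σ ^ 2 * prob w a t σ - 2 * m * ∑ σ, f σ * prob w a t σ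
          + m ^ 2 * ∑ σ, prob w a t σ := by
        rw [mul_sum, mul_sum, ← sum_sub_distrib, ← sum_add_distrib]
        exact sum_congr rfl fun σ _ => by ring
    _ = _ := by rw [hm, sum_prob hw hw₁]; simp only [avg]; ring

lemma sq_avg_le_avg_sq (f : S → ℝ) :
    avg w a t f ^ 2 ≤ avg w a t (fun σ => f σ ^ 2) := by
  have := avg_nonneg (t := t) (a := a) hw hw₁ fun σ => sq_nonneg (f σ - avg w a t f)
  rw [avg_sub_avg_sq hw hw₁] at this
  linarith

lemma var_nonneg (t : ℝ) : 0 ≤ var w a t :=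
  avg_nonneg hw hw₁ fun _ => sq_nonneg _

lemma var_le_avg_sq (t : ℝ) : var w a t ≤ avg w a t (fun σ => a σ ^ 2) := by
  rw [var, avg_sub_avg_sq hw hw₁]
  linarith [sq_nonneg (avg w a t a)]

lemma avg_abs_le_sqrt_avg_sq (f : S → ℝ) :
    avg w a t (fun σ => |f σ|) ≤ √(avg w a t fun σ => f σ ^ 2) := by
  refine (le_abs_self _).trans (Real.abs_le_sqrt ?_)
  simpa only [sq_abs] using sq_avg_le_avg_sq (t := t) (a := a) hw hw₁ fun σ => |f σ|

lemma replicaGap_le_two_mul_sqrt_var (t : ℝ) : replicaGap w a t ≤ 2 * √(var w a t) := by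
  set m := avg w a t a
  calc replicaGap w a t ≤ avg₂ w a t (fun σ τ => |a σ - m| + |a τ - m|) :=
        avg₂_mono hw hw₁ fun σ τ => (abs_sub_le _ m _).trans_eq (by rw [abs_sub_comm m])
    _ = 2 * avg w a t (fun σ => |a σ - m|) := by
        rw [avg₂_add, avg₂_left hw hw₁, avg₂_right hw hw₁ (fun σ => |a σ - m|)]; ring
    _ ≤ 2 * √(var w a t) := by
        gcongr
        exact avg_abs_le_sqrt_avg_sq hw hw₁ _

lemma hasDerivAt_prob (t : ℝ) (σ : S) :
    HasDerivAt (fun t => prob w a t σ) (prob w a t σ * (a σ - avg w a t a)) t := by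
  have hexp : ∀ τ, HasDerivAt (fun t => w τ * Real.exp (t * a τ))
      (w τ * Real.exp (t * a τ) * a τ) t := fun τ => by
    simpa [mul_assoc] using ((hasDerivAt_mul_const (a τ)).exp).const_mul (w τ)
  have hZ' : HasDerivAt (partitionFn w a) (∑ τ, w τ * Real.exp (t * a τ) * a τ) t :=
    HasDerivAt.fun_sum fun τ _ => hexp τ
  have hZ := (partitionFn_pos (a := a) hw hw₁ t).ne'
  refine ((hexp σ).fun_div hZ' hZ).congr_deriv ?_
  have hm : avg w a t a = (∑ τ, w τ * Real.exp (t * a τ) * a τ) / partitionFn w a t := by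
    simp only [avg, prob, sum_div]
    exact sum_congr rfl fun τ _ => by ring
  rw [hm, prob]
  field_simp

lemma hasDerivAt_avg (f : S → ℝ) (t : ℝ) :
    HasDerivAt (fun t => avg w a t f) (avg w a t fun σ => f σ * (a σ - avg w a t a)) t := by
  refine (HasDerivAt.fun_sum fun σ _ =>
    (hasDerivAt_prob hw hw₁ t σ).const_mul (f σ)).congr_deriv ?_
  exact sum_congr rfl fun σ _ => by ring

lemma hasDerivAt_avg₂ (F : S → S → ℝ) (t : ℝ) :
    HasDerivAt (fun t => avg₂ w a t F)
      (avg₂ w a t fun σ τ => F σ τ * ((a σ - avg w a t a) + (a τ - avg w a t a))) t := by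
  refine (HasDerivAt.fun_sum fun σ _ => HasDerivAt.fun_sum fun τ _ =>
    ((hasDerivAt_prob hw hw₁ t σ).mul (hasDerivAt_prob hw hw₁ t τ)).const_mul
      (F σ τ)).congr_deriv ?_
  exact sum_congr rfl fun σ _ => sum_congr rfl fun τ _ => by ring

lemma continuous_avg (f : S → ℝ) : Continuous fun t => avg w a t f :=
  continuous_iff_continuousAt.2 fun t => (hasDerivAt_avg hw hw₁ f t).continuousAt

lemma continuous_var : Continuous (var w a) := by
  have : var w a = fun t => avg w a t (fun σ => a σ ^ 2) - avg w a t a ^ 2 :=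
    funext fun t => avg_sub_avg_sq hw hw₁ a
  rw [this]
  exact (continuous_avg hw hw₁ _).sub ((continuous_avg hw hw₁ a).pow 2)

lemma avg_mul_sub_avg (f : S → ℝ) :
    avg w a t (fun σ => f σ * (a σ - avg w a t a)) = avg₂ w a t fun σ τ => f σ * (a σ - a τ) := by
  refine sum_congr rfl fun σ _ => ?_
  calc f σ * (a σ - avg w a t a) * prob w a t σ
      = f σ * prob w a t σ * (a σ * ∑ τ, prob w a t τ - ∑ τ, a τ * prob w a t τ) := by
        rw [sum_prob hw hw₁, avg]; ring
    _ = _ := by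
        rw [mul_sum, ← sum_sub_distrib, mul_sum]
        exact sum_congr rfl fun τ _ => by ring

lemma monotone_avg_comp {g : ℝ → ℝ} (hg : Monotone g) :
    Monotone fun t => avg w a t fun σ => g (a σ) := by
  refine monotone_of_hasDerivAt_nonneg (hasDerivAt_avg hw hw₁ _) fun t => ?_
  have hsymm : 2 * avg₂ w a t (fun σ τ => g (a σ) * (a σ - a τ))
      = avg₂ w a t fun σ τ => (g (a σ) - g (a τ)) * (a σ - a τ) := by
    conv_lhs => rw [two_mul]; enter [2]; rw [← avg₂_swap]
    rw [← avg₂_add]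
    congr; funext σ τ; ring
  have hcov : 0 ≤ avg₂ w a t fun σ τ => (g (a σ) - g (a τ)) * (a σ - a τ) := by
    refine avg₂_nonneg hw hw₁ fun σ τ => ?_
    rcases le_total (a σ) (a τ) with h | h
    · exact mul_nonneg_of_nonpos_of_nonpos (sub_nonpos.2 (hg h)) (sub_nonpos.2 h)
    · exact mul_nonneg (sub_nonneg.2 (hg h)) (sub_nonneg.2 h)
  show 0 ≤ avg w a t _
  rw [avg_mul_sub_avg hw hw₁]
  linarith

lemma antitone_avg_comp {g : ℝ → ℝ} (hg : Antitone g) :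
    Antitone fun t => avg w a t fun σ => g (a σ) := fun x y hxy => by
  have := monotone_avg_comp (a := a) hw hw₁ hg.neg hxy
  simp only [avg_neg] at this
  exact neg_le_neg_iff.1 this

lemma avg_sq_le_add_of_mem_Icc {x₀ x₁ x : ℝ} (hx : x ∈ Set.Icc x₀ x₁) :
    avg w a x (fun σ => a σ ^ 2) ≤
      avg w a x₀ (fun σ => a σ ^ 2) + avg w a x₁ (fun σ => a σ ^ 2) := by
  have hsplit : ∀ y : ℝ, y ^ 2 = max y 0 ^ 2 + min y 0 ^ 2 := fun y => by
    rcases le_total y 0 with h | h <;> simp [h]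
  have hpos : Monotone fun y : ℝ => max y 0 ^ 2 := fun y z h =>
    pow_le_pow_left₀ (le_max_right _ _) (max_le_max_right 0 h) 2
  have hneg : Antitone fun y : ℝ => min y 0 ^ 2 := fun y z h => by
    nlinarith [min_le_min_right 0 h, min_le_right y 0, min_le_right z 0]
  have havg : ∀ t, avg w a t (fun σ => a σ ^ 2)
      = avg w a t (fun σ => max (a σ) 0 ^ 2) + avg w a t (fun σ => min (a σ) 0 ^ 2) := fun t => by
    rw [← avg_add]; simp only [← hsplit]
  calc avg w a x (fun σ => a σ ^ 2)
      ≤ avg w a x₁ (fun σ => max (a σ) 0 ^ 2) + avg w a x₀ (fun σ => min (a σ) 0 ^ 2) := by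
        rw [havg]; exact add_le_add (monotone_avg_comp hw hw₁ hpos hx.2)
          (antitone_avg_comp hw hw₁ hneg hx.1)
    _ ≤ avg w a x₁ (fun σ => a σ ^ 2) + avg w a x₀ (fun σ => a σ ^ 2) := by
        rw [havg x₁, havg x₀]
        have := avg_nonneg (t := x₁) (a := a) hw hw₁ fun σ => sq_nonneg (min (a σ) 0)
        have := avg_nonneg (t := x₀) (a := a) hw hw₁ fun σ => sq_nonneg (max (a σ) 0)
        linarith
    _ = _ := add_comm _ _

lemma var_le_avg_sq_add_of_mem_Icc {x₀ x₁ x : ℝ} (hx : x ∈ Set.Icc x₀ x₁) :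
    var w a x ≤ avg w a x₀ (fun σ => a σ ^ 2) + avg w a x₁ (fun σ => a σ ^ 2) :=
  (var_le_avg_sq hw hw₁ x).trans (avg_sq_le_add_of_mem_Icc hw hw₁ hx)

lemma hasDerivAt_replicaGap (t : ℝ) :
    HasDerivAt (replicaGap w a)
      (avg₂ w a t fun σ τ => |a σ - a τ| * ((a σ - avg w a t a) + (a τ - avg w a t a))) t :=
  hasDerivAt_avg₂ hw hw₁ _ t

lemma abs_deriv_replicaGap_le (t : ℝ) :
    |avg₂ w a t fun σ τ => |a σ - a τ| * ((a σ - avg w a t a) + (a τ - avg w a t a))|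
      ≤ 2 * var w a t := by
  set m := avg w a t a
  calc _ ≤ avg₂ w a t (fun σ τ => (a σ - m) ^ 2 + (a τ - m) ^ 2) := by
        refine abs_avg₂_le hw hw₁ fun σ τ => ?_
        rw [abs_mul, abs_abs, ← abs_mul,
          show (a σ - a τ) * ((a σ - m) + (a τ - m)) = (a σ - m) ^ 2 - (a τ - m) ^ 2 by ring]
        exact (abs_sub _ _).trans_eq (by rw [abs_sq, abs_sq])
    _ = 2 * var w a t := by
        rw [avg₂_add, avg₂_left hw hw₁, avg₂_right hw hw₁ fun σ => (a σ - m) ^ 2, var]; ring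

lemma replicaGap_le_add_integral_var {x₀ x : ℝ} (hx : x₀ ≤ x) :
    replicaGap w a x₀ ≤ replicaGap w a x + 2 * ∫ y in x₀..x, var w a y := by
  have hgap : Continuous (replicaGap w a) :=
    continuous_iff_continuousAt.2 fun t => (hasDerivAt_replicaGap hw hw₁ t).continuousAt
  have := intervalIntegral.integral_le_sub_of_hasDeriv_right_of_le (φ := fun y => -(2 * var w a y))
    hx hgap.continuousOn (fun y _ => (hasDerivAt_replicaGap hw hw₁ y).hasDerivWithinAt)
    ((continuous_var hw hw₁).const_mul 2).neg.integrableOn_Icc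
    fun y _ => neg_le_of_abs_le (abs_deriv_replicaGap_le hw hw₁ y)
  rw [intervalIntegral.integral_neg, intervalIntegral.integral_const_mul] at this
  linarith

lemma replicaGap_le_sqrt_var_add_integral {x₀ x₁ x : ℝ} (hx : x ∈ Set.Icc x₀ x₁) :
    replicaGap w a x₀ ≤ 2 * √(var w a x) + 2 * ∫ y in x₀..x₁, var w a y := by
  have hmono : ∫ y in x₀..x, var w a y ≤ ∫ y in x₀..x₁, var w a y :=
    intervalIntegral.integral_mono_interval le_rfl hx.1 hx.2
      (ae_of_all _ fun y => var_nonneg hw hw₁ y) ((continuous_var hw hw₁).intervalIntegrable _ _)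
  linarith [replicaGap_le_add_integral_var (a := a) hw hw₁ hx.1,
    replicaGap_le_two_mul_sqrt_var (a := a) hw hw₁ x]

lemma replicaGap_nonneg (t : ℝ) : 0 ≤ replicaGap w a t :=
  avg₂_nonneg hw hw₁ fun _ _ => abs_nonneg _

end Positive

end Deterministic

section Random

variable {μ : Measure Ω} {S : Type*} [Fintype S] {ν A : Ω → S → ℝ}

lemma measurable_var_uncurry (hν : ∀ σ, Measurable fun ω => ν ω σ)
    (hA : ∀ σ, Measurable fun ω => A ω σ) :
    Measurable fun p : Ω × ℝ => var (ν p.1) (A p.1) p.2 := by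
  simp only [var, avg, prob, partitionFn]
  fun_prop

section Integrability

variable (hν0 : ∀ ω σ, 0 ≤ ν ω σ) (hνpos : ∀ ω, 0 < ∑ σ, ν ω σ)
  (hν : ∀ σ, Measurable fun ω => ν ω σ) (hA : ∀ σ, Measurable fun ω => A ω σ) {x₀ x₁ : ℝ}
  (h₀ : Integrable (fun ω => avg (ν ω) (A ω) x₀ fun σ => A ω σ ^ 2) μ)
  (h₁ : Integrable (fun ω => avg (ν ω) (A ω) x₁ fun σ => A ω σ ^ 2) μ)
include hν0 hνpos hν hA h₀ h₁

lemma integrable_var {x : ℝ} (hx : x ∈ Set.Icc x₀ x₁) :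
    Integrable (fun ω => var (ν ω) (A ω) x) μ :=
  (h₀.add h₁).mono' ((measurable_var_uncurry hν hA).comp
      (measurable_id.prodMk measurable_const)).aestronglyMeasurable <|
    ae_of_all _ fun ω => by
      rw [Real.norm_of_nonneg (var_nonneg (hν0 ω) (hνpos ω) x)]
      exact var_le_avg_sq_add_of_mem_Icc (hν0 ω) (hνpos ω) hx

lemma integrable_var_prod :
    Integrable (fun p : Ω × ℝ => var (ν p.1) (A p.1) p.2)
      (μ.prod (volume.restrict (Set.Ioc x₀ x₁))) := by
  have hmem : ∀ᵐ p ∂μ.prod (volume.restrict (Set.Ioc x₀ x₁)), p.2 ∈ Set.Ioc x₀ x₁ :=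
    (Measure.ae_prod_iff_ae_ae (measurable_snd measurableSet_Ioc)).2
      (ae_of_all _ fun _ => ae_restrict_mem measurableSet_Ioc)
  refine ((h₀.add h₁).comp_fst _).mono' (measurable_var_uncurry hν hA).aestronglyMeasurable ?_
  filter_upwards [hmem] with p hp
  rw [Real.norm_of_nonneg (var_nonneg (hν0 p.1) (hνpos p.1) p.2)]
  exact var_le_avg_sq_add_of_mem_Icc (hν0 p.1) (hνpos p.1) (Set.Ioc_subset_Icc_self hp)

end Integrability

theorem integral_replicaGap_le [IsProbabilityMeasure μ] (hν0 : ∀ ω σ, 0 ≤ ν ω σ)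
    (hνpos : ∀ ω, 0 < ∑ σ, ν ω σ) (hν : ∀ σ, Measurable fun ω => ν ω σ)
    (hA : ∀ σ, Measurable fun ω => A ω σ) {x₀ δ : ℝ} (hδ : 0 < δ)
    (h₀ : Integrable (fun ω => avg (ν ω) (A ω) x₀ fun σ => A ω σ ^ 2) μ)
    (h₁ : Integrable (fun ω => avg (ν ω) (A ω) (x₀ + δ) fun σ => A ω σ ^ 2) μ) :
    ∫ ω, replicaGap (ν ω) (A ω) x₀ ∂μ ≤
      2 * √(δ⁻¹ * ∫ x in x₀..(x₀ + δ), ∫ ω, var (ν ω) (A ω) x ∂μ) +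
        2 * ∫ x in x₀..(x₀ + δ), ∫ ω, var (ν ω) (A ω) x ∂μ := by
  have hle : x₀ ≤ x₀ + δ := by linarith
  have hint := integrable_var_prod hν0 hνpos hν hA h₀ h₁
  simp only [intervalIntegral.integral_of_le hle]
  set T := ∫ x in Set.Ioc x₀ (x₀ + δ), ∫ ω, var (ν ω) (A ω) x ∂μ
  have hswap : ∫ ω, (∫ x in Set.Ioc x₀ (x₀ + δ), var (ν ω) (A ω) x) ∂μ = T :=
    integral_integral_swap hint
  obtain ⟨x, hxI, hx⟩ := exists_le_setAverage (by simp [hδ]) (by simp)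
    hint.integral_prod_right
  rw [setAverage_eq, Real.volume_real_Ioc_of_le hle, add_sub_cancel_left, smul_eq_mul] at hx
  have hx' : x ∈ Set.Icc x₀ (x₀ + δ) := Set.Ioc_subset_Icc_self hxI
  have hvar := integrable_var hν0 hνpos hν hA h₀ h₁ hx'
  have hgap : ∀ ω, replicaGap (ν ω) (A ω) x₀ ≤
      2 * √(var (ν ω) (A ω) x) + 2 * ∫ y in Set.Ioc x₀ (x₀ + δ), var (ν ω) (A ω) y := fun ω => by
    simpa only [intervalIntegral.integral_of_le hle] using
      replicaGap_le_sqrt_var_add_integral (hν0 ω) (hνpos ω) hx'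
  have hsqrt := integrable_sqrt_of_nonneg hvar fun ω => var_nonneg (hν0 ω) (hνpos ω) x
  calc ∫ ω, replicaGap (ν ω) (A ω) x₀ ∂μ
      ≤ ∫ ω, (2 * √(var (ν ω) (A ω) x) + 2 * ∫ y in Set.Ioc x₀ (x₀ + δ), var (ν ω) (A ω) y) ∂μ :=
        integral_mono_of_nonneg (ae_of_all _ fun ω => replicaGap_nonneg (hν0 ω) (hνpos ω) x₀)
          ((hsqrt.const_mul 2).add (hint.integral_prod_left.const_mul 2)) (ae_of_all _ hgap)
    _ = 2 * ∫ ω, √(var (ν ω) (A ω) x) ∂μ + 2 * T := by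
        rw [integral_add (hsqrt.const_mul 2) (hint.integral_prod_left.const_mul 2),
          integral_const_mul, integral_const_mul, hswap]
    _ ≤ 2 * √(δ⁻¹ * T) + 2 * T := by
        gcongr
        exact (integral_sqrt_le_sqrt_integral hvar fun ω => var_nonneg (hν0 ω) (hνpos ω) x).trans
          (Real.sqrt_le_sqrt hx)

end Random

lemma gAvg_one_eq_avg {Ω S : Type*} [Fintype S] (ν A : Ω → S → ℝ) (t : ℝ)
    (f : (Fin 1 → S) → Ω → ℝ) (ω : Ω) :
    gAvg ν A t 1 f ω = avg (ν ω) (A ω) t fun σ => f (fun _ => σ) ω := by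
  refine Fintype.sum_equiv (Equiv.funUnique (Fin 1) S) _ _ fun σs => ?_
  have hσs : (fun _ => σs default) = σs := funext fun i => congrArg σs (Subsingleton.elim _ _)
  rw [Fin.prod_univ_one]
  exact congrArg (fun τs => f τs ω * gGibbs ν A t ω (τs 0)) hσs.symm

lemma gAvg_two_eq_avg₂ {Ω S : Type*} [Fintype S] (ν A : Ω → S → ℝ) (t : ℝ)
    (F : (Fin 2 → S) → Ω → ℝ) (ω : Ω) :
    gAvg ν A t 2 F ω = avg₂ (ν ω) (A ω) t fun σ τ => F ![σ, τ] ω := by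
  rw [gAvg, avg₂, ← Fintype.sum_prod_type']
  refine Fintype.sum_equiv (finTwoArrowEquiv S) _ _ fun σs => ?_
  have hσs : ![σs 0, σs 1] = σs := by ext i; fin_cases i <;> rfl
  rw [Fin.prod_univ_two]
  show _ = F ![σs 0, σs 1] ω * _
  rw [hσs]
  rfl

end FiniteGibbs

theorem statement4_general {Ω : Type*} [MeasurableSpace Ω] (μ : Measure Ω) [IsProbabilityMeasure μ]
    {S : Type*} [Fintype S]
    (ν : Ω → S → ℝ) (A : Ω → S → ℝ)
    (hν0 : ∀ ω σ, 0 ≤ ν ω σ) (hνpos : ∀ ω, 0 < ∑ σ : S, ν ω σ)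
    (hνmeas : ∀ σ, Measurable fun ω => ν ω σ)
    (hAmeas : ∀ σ, Measurable fun ω => A ω σ)
    (x₀ δ : ℝ) (hδ : 0 < δ)
    (hA2 : ∀ x ∈ Set.Icc x₀ (x₀ + δ), Integrable (fun ω =>
      gAvg ν A x 1 (fun σs ω' => (A ω' (σs 0)) ^ 2) ω) μ) :
    (∫ ω, gAvg ν A x₀ 2 (fun σs ω' => |A ω' (σs 0) - A ω' (σs 1)|) ω ∂μ) ≤
      2 * Real.sqrt (δ⁻¹ * ∫ x in x₀..(x₀ + δ),
          (∫ ω, gAvg ν A x 1 (fun σs ω' =>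
            (A ω' (σs 0) - gAvg ν A x 1 (fun τs ω'' => A ω'' (τs 0)) ω') ^ 2) ω ∂μ)) +
      8 * ∫ x in x₀..(x₀ + δ),
          (∫ ω, gAvg ν A x 1 (fun σs ω' =>
            (A ω' (σs 0) - gAvg ν A x 1 (fun τs ω'' => A ω'' (τs 0)) ω') ^ 2) ω ∂μ) := by
  have hle : x₀ ≤ x₀ + δ := by linarith
  simp only [FiniteGibbs.gAvg_one_eq_avg, FiniteGibbs.gAvg_two_eq_avg₂, Matrix.cons_val_zero,
    Matrix.cons_val_one] at hA2 ⊢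
  have hT : 0 ≤ ∫ x in x₀..(x₀ + δ), ∫ ω, FiniteGibbs.var (ν ω) (A ω) x ∂μ :=
    intervalIntegral.integral_nonneg hle fun x _ =>
      integral_nonneg fun ω => FiniteGibbs.var_nonneg (hν0 ω) (hνpos ω) x
  refine (FiniteGibbs.integral_replicaGap_le hν0 hνpos hνmeas hAmeas hδ (hA2 x₀ ⟨le_rfl, hle⟩)
    (hA2 (x₀ + δ) ⟨hle, le_rfl⟩)).trans ?_
  exact add_le_add le_rfl (mul_le_mul_of_nonneg_right (by norm_num : (2 : ℝ) ≤ 8) hT)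

/-- For a random Gibbs measure on a finite set with `E⟨A²⟩_x < ∞` on
`[x₀, x₀ + δ]`, `δ > 0`:
`E⟨|A(σ¹) − A(σ²)|⟩_{x₀} ≤ 2 (δ⁻¹ ∫_{x₀}^{x₀+δ} E⟨(A − ⟨A⟩_x)²⟩_x dx)^{1/2}
  + 8 ∫_{x₀}^{x₀+δ} E⟨(A − ⟨A⟩_x)²⟩_x dx`. -/
theorem statement4 {Ω : Type*} [MeasurableSpace Ω] (μ : Measure Ω) [IsProbabilityMeasure μ]
    {S : Type*} [Fintype S] [Nonempty S]
    (ν : Ω → S → ℝ) (A : Ω → S → ℝ)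
    (hν0 : ∀ ω σ, 0 ≤ ν ω σ) (hνpos : ∀ ω, 0 < ∑ σ : S, ν ω σ)
    (hνmeas : ∀ σ, Measurable fun ω => ν ω σ)
    (hAmeas : ∀ σ, Measurable fun ω => A ω σ)
    (x₀ δ : ℝ) (hδ : 0 < δ)
    (hA2 : ∀ x ∈ Set.Icc x₀ (x₀ + δ), Integrable (fun ω =>
      gAvg ν A x 1 (fun σs ω' => (A ω' (σs 0)) ^ 2) ω) μ) :
    (∫ ω, gAvg ν A x₀ 2 (fun σs ω' => |A ω' (σs 0) - A ω' (σs 1)|) ω ∂μ) ≤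
      2 * Real.sqrt (δ⁻¹ * ∫ x in x₀..(x₀ + δ),
          (∫ ω, gAvg ν A x 1 (fun σs ω' =>
            (A ω' (σs 0) - gAvg ν A x 1 (fun τs ω'' => A ω'' (τs 0)) ω') ^ 2) ω ∂μ)) +
      8 * ∫ x in x₀..(x₀ + δ),
          (∫ ω, gAvg ν A x 1 (fun σs ω' =>
            (A ω' (σs 0) - gAvg ν A x 1 (fun τs ω'' => A ω'' (τs 0)) ω') ^ 2) ω ∂μ) :=
  statement4_general μ ν A hν0 hνpos hνmeas hAmeas x₀ δ hδ hA2

end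
end
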